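/- For every word w ∈ 𝔞*, the map λ_w : l∞(X) → l∞(X) is a *-homomorphism, and λ_w(D_X) ⊆ D_X. -/

import Mathlib

open scoped ENNReal
open Classical
set_option linter.unusedSectionVars false
set_option synthInstance.maxHeartbeats 1000000
set_option maxHeartbeats 1000000

noncomputable section

variable {𝔞 : Type*} [Fintype 𝔞] [Nonempty 𝔞] [TopologicalSpace 𝔞] [DiscreteTopology 𝔞]

/-- The one-sided shift map on the full one-sided shift `𝔞^ℕ`. -/
def shift (x : ℕ → 𝔞) : ℕ → 𝔞 := fun n => x (n + 1)

/-- Concatenation `u x` of a finite word `u` with an infinite sequence `x`. -/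
def wcat (u : List 𝔞) (x : ℕ → 𝔞) : ℕ → 𝔞 := fun n =>
  if h : n < u.length then u.get ⟨n, h⟩ else x (n - u.length)

/-- `l∞(X)`: the C*-algebra of bounded complex-valued functions on `X`,
with pointwise operations and the supremum norm. -/
abbrev Linf (X : Set (ℕ → 𝔞)) : Type _ := lp (fun _ : X => ℂ) ∞

/-- The set `C(u,v) = {vx : x ∈ X, vx ∈ X, ux ∈ X}`. -/
def cyl (X : Set (ℕ → 𝔞)) (u v : List 𝔞) : Set (ℕ → 𝔞) :=
  {y | ∃ x, x ∈ X ∧ wcat u x ∈ X ∧ wcat v x ∈ X ∧ y = wcat v x}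

/-- The indicator function of a subset `S`, as an element of `l∞(X)`. -/
def chi (X S : Set (ℕ → 𝔞)) : Linf X :=
  ⟨fun x => S.indicator (fun _ => (1 : ℂ)) (x : ℕ → 𝔞),
    memℓp_infty ⟨1, by
      rintro r ⟨x, rfl⟩
      by_cases h : (x : ℕ → 𝔞) ∈ S <;> simp [Set.indicator_apply, h]⟩⟩

/-- `D_X`: the smallest C*-subalgebra (norm-closed, star-closed subalgebra) of `l∞(X)`
containing the indicator functions `χ_{C(u,v)}` for all words `u, v`. -/
def Dalg (X : Set (ℕ → 𝔞)) : NonUnitalStarSubalgebra ℂ (Linf X) :=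
  (NonUnitalStarAlgebra.adjoin ℂ
    {f : Linf X | ∃ u v : List 𝔞, f = chi X (cyl X u v)}).topologicalClosure

lemma chi_cyl_mem_Dalg (X : Set (ℕ → 𝔞)) (u v : List 𝔞) : chi X (cyl X u v) ∈ Dalg X :=
  (NonUnitalStarAlgebra.adjoin ℂ _).le_topologicalClosure
    (NonUnitalStarAlgebra.subset_adjoin ℂ _ ⟨u, v, rfl⟩)

/-- The map `λ_w : l∞(X) → l∞(X)`, `λ_w(f)(x) = f(wx)` if `wx ∈ X`, and `0` otherwise. -/
def lambdaMap (X : Set (ℕ → 𝔞)) (w : List 𝔞) (f : Linf X) : Linf X :=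
  ⟨fun x => if h : wcat w (x : ℕ → 𝔞) ∈ X then f ⟨wcat w (x : ℕ → 𝔞), h⟩ else 0,
    memℓp_infty ⟨‖f‖, by
      rintro r ⟨x, rfl⟩
      dsimp only
      split_ifs with h
      · exact lp.norm_apply_le_norm ENNReal.top_ne_zero f _
      · rw [norm_zero]; exact norm_nonneg f⟩⟩

/-!
`λ_w` is precomposition with the partial map `x ↦ wx`, so it commutes with the pointwise
operations. Being a star homomorphism between C⋆-algebras it is contractive, hence continuous,
so it suffices to show that it maps each generator `χ_{C(u,v)}` into `D_X`. Now `λ_w χ_S` is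
the indicator of `{x | wx ∈ S}` whenever `S ⊆ X`, and by shift invariance
`{x | wx ∈ C(u,v)}` is `C(w,ε) ∩ C(u,v')` if `v = wv'`, is `C(w,ε) ∩ C(uw',ε)` if `w = vw'`,
and is empty when neither of `v, w` is a prefix of the other.
-/

lemma wcat_nil (x : ℕ → 𝔞) : wcat [] x = x := funext fun n => by simp [wcat]

lemma wcat_cons_succ (c : 𝔞) (u : List 𝔞) (x : ℕ → 𝔞) (n : ℕ) :
    wcat (c :: u) x (n + 1) = wcat u x n := by
  simp only [wcat, List.length_cons]
  by_cases h : n < u.length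
  · rw [dif_pos (by omega : n + 1 < u.length + 1), dif_pos h]; rfl
  · rw [dif_neg (by omega), dif_neg h]; congr 1; omega

lemma shift_wcat_cons (c : 𝔞) (u : List 𝔞) (x : ℕ → 𝔞) : shift (wcat (c :: u) x) = wcat u x :=
  funext (wcat_cons_succ c u x)

lemma wcat_append (u v : List 𝔞) (x : ℕ → 𝔞) : wcat (u ++ v) x = wcat u (wcat v x) := by
  induction u with
  | nil => rw [List.nil_append, wcat_nil]
  | cons c u ih =>
    funext n
    cases n with
    | zero => simp [wcat]
    | succ n => rw [List.cons_append, wcat_cons_succ, wcat_cons_succ, ih]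

lemma wcat_apply_of_lt_length (u : List 𝔞) (x : ℕ → 𝔞) {n : ℕ} (h : n < u.length) :
    wcat u x n = u[n] := dif_pos h

lemma wcat_apply_add_length (u : List 𝔞) (x : ℕ → 𝔞) (n : ℕ) : wcat u x (n + u.length) = x n := by
  simp only [wcat, dif_neg (Nat.not_lt.2 (Nat.le_add_left _ n)), Nat.add_sub_cancel]

lemma wcat_injective (u : List 𝔞) : Function.Injective (wcat u) := fun x y h =>
  funext fun n => by simpa only [wcat_apply_add_length] using congrFun h (n + u.length)

lemma prefix_of_wcat_eq {u v : List 𝔞} {x y : ℕ → 𝔞} (h : wcat u x = wcat v y)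
    (hl : u.length ≤ v.length) : u <+: v := by
  refine List.prefix_iff_eq_take.2 (List.ext_getElem (by simpa using hl) fun n hu _ => ?_)
  rw [List.getElem_take, ← wcat_apply_of_lt_length u x hu,
    ← wcat_apply_of_lt_length v y (by omega), h]

section

variable {X : Set (ℕ → 𝔞)}

lemma mem_of_wcat_mem (hXinv : ∀ x ∈ X, shift x ∈ X) (u : List 𝔞) {x : ℕ → 𝔞}
    (h : wcat u x ∈ X) : x ∈ X := by
  induction u with
  | nil => rwa [wcat_nil] at h
  | cons c u ih => exact ih (shift_wcat_cons c u x ▸ hXinv _ h)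

lemma cyl_subset (u v : List 𝔞) : cyl X u v ⊆ X := by
  rintro _ ⟨x, -, -, hv, rfl⟩
  exact hv

lemma mem_cyl_nil {w : List 𝔞} {x : ℕ → 𝔞} : x ∈ cyl X w [] ↔ x ∈ X ∧ wcat w x ∈ X := by
  simp only [cyl, wcat_nil, Set.mem_ofPred_eq]
  constructor
  · rintro ⟨y, hy, hwy, -, rfl⟩
    exact ⟨hy, hwy⟩
  · rintro ⟨hx, hwx⟩
    exact ⟨x, hx, hwx, hx, rfl⟩

lemma preimage_wcat_cyl_append (hXinv : ∀ x ∈ X, shift x ∈ X) (u w v : List 𝔞) :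
    wcat w ⁻¹' cyl X u (w ++ v) = cyl X w [] ∩ cyl X u v := by
  ext x
  simp only [Set.mem_preimage, Set.mem_inter_iff, mem_cyl_nil]
  constructor
  · rintro ⟨y, hy, huy, hwvy, heq⟩
    rw [wcat_append] at heq hwvy
    obtain rfl := wcat_injective w heq
    have hvy := mem_of_wcat_mem hXinv w hwvy
    exact ⟨⟨hvy, hwvy⟩, y, hy, huy, hvy, rfl⟩
  · rintro ⟨⟨-, hwx⟩, y, hy, huy, -, rfl⟩
    refine ⟨y, hy, huy, ?_, ?_⟩ <;> rw [wcat_append]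
    exact hwx

lemma preimage_wcat_append_cyl (hXinv : ∀ x ∈ X, shift x ∈ X) (u v w : List 𝔞) :
    wcat (v ++ w) ⁻¹' cyl X u v = cyl X (v ++ w) [] ∩ cyl X (u ++ w) [] := by
  ext x
  simp only [Set.mem_preimage, Set.mem_inter_iff, mem_cyl_nil, wcat_append]
  have hx_of : wcat v (wcat w x) ∈ X → x ∈ X := fun h =>
    mem_of_wcat_mem hXinv (v ++ w) (by rwa [wcat_append])
  constructor
  · rintro ⟨y, -, huy, hvy, heq⟩
    obtain rfl := wcat_injective v heq
    exact ⟨⟨hx_of hvy, hvy⟩, hx_of hvy, huy⟩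
  · rintro ⟨⟨-, hvwx⟩, -, huwx⟩
    exact ⟨wcat w x, mem_of_wcat_mem hXinv v hvwx, huwx, hvwx, rfl⟩

lemma preimage_wcat_cyl_eq_empty {u v w : List 𝔞} (hwv : ¬ w <+: v) (hvw : ¬ v <+: w) :
    wcat w ⁻¹' cyl X u v = ∅ := by
  refine Set.eq_empty_of_forall_notMem fun x hx => ?_
  obtain ⟨y, -, -, -, heq⟩ := hx
  rcases le_total w.length v.length with hl | hl
  · exact hwv (prefix_of_wcat_eq heq hl)
  · exact hvw (prefix_of_wcat_eq heq.symm hl)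

lemma chi_apply (S : Set (ℕ → 𝔞)) (x : X) :
    chi X S x = S.indicator (fun _ => (1 : ℂ)) (x : ℕ → 𝔞) := rfl

lemma chi_inter (S T : Set (ℕ → 𝔞)) : chi X (S ∩ T) = chi X S * chi X T :=
  lp.ext <| funext fun x => by
    simp only [lp.infty_coeFn_mul, Pi.mul_apply, chi_apply]
    simpa using Set.inter_indicator_mul (M₀ := ℂ) (fun _ => 1) (fun _ => 1) (x : ℕ → 𝔞)

lemma chi_empty : chi X ∅ = 0 :=
  lp.ext <| funext fun x => by simp [chi_apply]

lemma lambdaMap_apply (w : List 𝔞) (f : Linf X) (x : X) :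
    lambdaMap X w f x = if h : wcat w (x : ℕ → 𝔞) ∈ X then f ⟨wcat w x, h⟩ else 0 := rfl

variable (X) in
def lambdaStarHom (w : List 𝔞) : Linf X →⋆ₙₐ[ℂ] Linf X where
  toFun := lambdaMap X w
  map_smul' c f := lp.ext <| funext fun x => by
    by_cases h : wcat w (x : ℕ → 𝔞) ∈ X <;> simp [lambdaMap_apply, h]
  map_zero' := lp.ext <| funext fun x => by
    by_cases h : wcat w (x : ℕ → 𝔞) ∈ X <;> simp [lambdaMap_apply, h]
  map_add' f g := lp.ext <| funext fun x => by
    by_cases h : wcat w (x : ℕ → 𝔞) ∈ X <;> simp [lambdaMap_apply, h]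
  map_mul' f g := lp.ext <| funext fun x => by
    by_cases h : wcat w (x : ℕ → 𝔞) ∈ X <;> simp [lambdaMap_apply, h]
  map_star' f := lp.ext <| funext fun x => by
    by_cases h : wcat w (x : ℕ → 𝔞) ∈ X <;> simp [lambdaMap_apply, h]

lemma lambdaMap_chi_of_subset (w : List 𝔞) {S : Set (ℕ → 𝔞)} (hS : S ⊆ X) :
    lambdaMap X w (chi X S) = chi X (wcat w ⁻¹' S) :=
  lp.ext <| funext fun x => by
    by_cases h : wcat w (x : ℕ → 𝔞) ∈ X
    · simp [lambdaMap_apply, chi_apply, h, Set.indicator_apply]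
    · simpa [lambdaMap_apply, chi_apply, h, Set.indicator_apply] using fun hS' => h (hS hS')

lemma lambdaMap_chi_cyl_mem_Dalg (hXinv : ∀ x ∈ X, shift x ∈ X) (w u v : List 𝔞) :
    lambdaMap X w (chi X (cyl X u v)) ∈ Dalg X := by
  rw [lambdaMap_chi_of_subset w (cyl_subset u v)]
  by_cases hwv : w <+: v
  · obtain ⟨v, rfl⟩ := hwv
    rw [preimage_wcat_cyl_append hXinv, chi_inter]
    exact mul_mem (chi_cyl_mem_Dalg X _ _) (chi_cyl_mem_Dalg X _ _)
  by_cases hvw : v <+: w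
  · obtain ⟨w, rfl⟩ := hvw
    rw [preimage_wcat_append_cyl hXinv, chi_inter]
    exact mul_mem (chi_cyl_mem_Dalg X _ _) (chi_cyl_mem_Dalg X _ _)
  rw [preimage_wcat_cyl_eq_empty hwv hvw, chi_empty]
  exact zero_mem _

open scoped CStarAlgebra in
lemma continuous_lambdaStarHom (w : List 𝔞) : Continuous (lambdaStarHom X w) :=
  map_continuous _

lemma isClosed_Dalg : IsClosed (Dalg X : Set (Linf X)) :=
  NonUnitalStarSubalgebra.isClosed_topologicalClosure _

lemma Dalg_le_comap (φ : Linf X →⋆ₙₐ[ℂ] Linf X) (hφ : Continuous φ)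
    (hgen : ∀ u v : List 𝔞, φ (chi X (cyl X u v)) ∈ Dalg X) :
    Dalg X ≤ (Dalg X).comap φ :=
  NonUnitalStarSubalgebra.topologicalClosure_minimal _
    (NonUnitalStarAlgebra.adjoin_le fun _ ⟨u, v, hf⟩ => hf ▸ hgen u v)
    (isClosed_Dalg.preimage hφ)

end

theorem lambdaMap_starHom_and_Dalg_invariant_general (X : Set (ℕ → 𝔞))
    (hXinv : ∀ x ∈ X, shift x ∈ X) (w : List 𝔞) :
    (∀ f g : Linf X, lambdaMap X w (f + g) = lambdaMap X w f + lambdaMap X w g) ∧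
    (∀ (c : ℂ) (f : Linf X), lambdaMap X w (c • f) = c • lambdaMap X w f) ∧
    (∀ f g : Linf X, lambdaMap X w (f * g) = lambdaMap X w f * lambdaMap X w g) ∧
    (∀ f : Linf X, lambdaMap X w (star f) = star (lambdaMap X w f)) ∧
    (∀ f ∈ Dalg X, lambdaMap X w f ∈ Dalg X) := by
  let φ := lambdaStarHom X w
  exact ⟨map_add φ, map_smul φ, map_mul φ, map_star φ, fun f hf =>
    Dalg_le_comap φ (continuous_lambdaStarHom w) (lambdaMap_chi_cyl_mem_Dalg hXinv w) hf⟩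

/-- for every word `w ∈ 𝔞*`, the map `λ_w : l∞(X) → l∞(X)` is a
*-homomorphism, and `λ_w(D_X) ⊆ D_X`. -/
theorem lambdaMap_starHom_and_Dalg_invariant (X : Set (ℕ → 𝔞)) (hXclosed : IsClosed X)
    (hXinv : ∀ x ∈ X, shift x ∈ X) (w : List 𝔞) :
    (∀ f g : Linf X, lambdaMap X w (f + g) = lambdaMap X w f + lambdaMap X w g) ∧
    (∀ (c : ℂ) (f : Linf X), lambdaMap X w (c • f) = c • lambdaMap X w f) ∧
    (∀ f g : Linf X, lambdaMap X w (f * g) = lambdaMap X w f * lambdaMap X w g) ∧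
    (∀ f : Linf X, lambdaMap X w (star f) = star (lambdaMap X w f)) ∧
    (∀ f ∈ Dalg X, lambdaMap X w f ∈ Dalg X) :=
  lambdaMap_starHom_and_Dalg_invariant_general X hXinv w
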